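/- arXiv:1806.09468 — 4 statements merged into one kernel-verified Lean document; each statement's English description precedes it below -/
import Mathlib

section
/- Let n be a nonnegative integer and let f(t) = Σ_{m=0}^{∞} c_m t^m be a power series with complex coefficients converging on a disk of radius R > n. Then the series Σ_{m=0}^{∞} c_m S(m,n) converges and Σ_{k=0}^{n} C(n,k) (-1)^k f(k) = (-1)^n · n! · Σ_{m=0}^{∞} c_m S(m,n). -/
open Finset

/-- The Stirling number of the second kind `S(m,n)`, defined (as a complex number) by
`n! * S(m,n) = ∑ k ∈ range (n+1), (-1)^(n-k) * C(n,k) * k^m` (with `(0:ℂ)^0 = 1`). -/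
noncomputable def stirling2 (m n : ℕ) : ℂ :=
  (n.factorial : ℂ)⁻¹ *
    ∑ k ∈ range (n + 1), (-1) ^ (n - k) * (n.choose k : ℂ) * (k : ℂ) ^ m

/-!
Expanding each `f k` into its power series, which converges since `k ≤ n < R`, and exchanging
the finite sum over `k` with the series over `m` turns the left-hand side into
`∑ₘ cₘ ∑ₖ C(n,k) (-1)^k k^m`, and since `(-1)^k = (-1)^n (-1)^(n-k)` the inner sum is `(-1)^n n! S(m,n)`.
-/

theorem HasSum.coeff_mul_sum_mul_pow {α ι : Type*} [CommSemiring α] [TopologicalSpace α]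
    [IsTopologicalSemiring α] {c : ℕ → α} {f : α → α} (s : Finset ι) (w z : ι → α)
    (hf : ∀ k ∈ s, HasSum (fun m ↦ c m * z k ^ m) (f (z k))) :
    HasSum (fun m ↦ c m * ∑ k ∈ s, w k * z k ^ m) (∑ k ∈ s, w k * f (z k)) := by
  simp_rw [mul_sum, mul_left_comm (c _)]
  exact hasSum_sum fun k hk ↦ (hf k hk).mul_left (w k)

theorem neg_one_pow_mul_neg_one_pow_sub {R : Type*} [Monoid R] [HasDistribNeg R] {n k : ℕ}
    (hk : k ≤ n) : (-1 : R) ^ n * (-1) ^ (n - k) = (-1) ^ k := by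
  obtain ⟨j, rfl⟩ := Nat.exists_eq_add_of_le hk
  rw [Nat.add_sub_cancel_left, pow_add, mul_assoc, ← pow_add, ← two_mul, pow_mul]
  simp

theorem sum_choose_mul_neg_one_pow_mul_pow_eq_stirling2 (m n : ℕ) :
    ∑ k ∈ range (n + 1), (n.choose k : ℂ) * (-1) ^ k * (k : ℂ) ^ m =
      (-1) ^ n * n.factorial * stirling2 m n := by
  have hfact : (n.factorial : ℂ) ≠ 0 := mod_cast n.factorial_ne_zero
  rw [stirling2, mul_assoc, mul_inv_cancel_left₀ hfact, mul_sum]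
  refine sum_congr rfl fun k hk ↦ ?_
  rw [← neg_one_pow_mul_neg_one_pow_sub (Nat.lt_succ_iff.mp (mem_range.mp hk))]
  ring

/-- Let `n` be a nonnegative integer and `f(t) = ∑ c_m t^m` a power series with complex
coefficients converging on a disk of radius `R > n`. Then `∑ c_m S(m,n)` converges and
`∑ k in range (n+1), C(n,k) * (-1)^k * f(k) = (-1)^n * n! * ∑' m, c_m * S(m,n)`. -/
theorem alternating_binomial_analytic_sum_eq_stirling (n : ℕ) (R : ℝ) (hR : (n : ℝ) < R)
    (c : ℕ → ℂ) (f : ℂ → ℂ)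
    (hf : ∀ z : ℂ, ‖z‖ < R → HasSum (fun m : ℕ => c m * z ^ m) (f z)) :
    Summable (fun m : ℕ => c m * stirling2 m n) ∧
    ∑ k ∈ range (n + 1), (n.choose k : ℂ) * (-1) ^ k * f (k : ℂ) =
      (-1) ^ n * (n.factorial : ℂ) * ∑' m : ℕ, c m * stirling2 m n := by
  have hconv : ∀ k ∈ range (n + 1), HasSum (fun m ↦ c m * (k : ℂ) ^ m) (f k) := fun k hk ↦
    hf k <| by
      rw [Complex.norm_natCast]
      exact (Nat.cast_le.mpr (Nat.lt_succ_iff.mp (mem_range.mp hk))).trans_lt hR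
  have hsum := HasSum.coeff_mul_sum_mul_pow _ (fun k ↦ (n.choose k : ℂ) * (-1) ^ k) _ hconv
  simp only [sum_choose_mul_neg_one_pow_mul_pow_eq_stirling2, mul_left_comm (c _)] at hsum
  have hne : (-1 : ℂ) ^ n * n.factorial ≠ 0 :=
    mul_ne_zero (pow_ne_zero _ (neg_ne_zero.mpr one_ne_zero)) (mod_cast n.factorial_ne_zero)
  refine ⟨(summable_mul_left_iff hne).mp hsum.summable, ?_⟩
  rw [← tsum_mul_left, hsum.tsum_eq]
end

section
/- For every nonnegative integer n, Σ_{k=0}^{n} C(n,k) (-1)^k k^{n+1} = (-1)^n · (n/2) · (n+1)!. -/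
/-!
Up to the sign `(-1)^n`, the sum is the `n`-th forward difference `D` of `x ↦ x^(n+1)` at `0`.
Since the `(n+1)`-st difference of `x^(n+1)` is the constant `(n+1)!`, `D` is affine with slope
`(n+1)!`, so `D 0 = D (-n) + n (n+1)!`. Reflecting the summation index `k ↦ n - k` turns
`D (-n)` into `(-1)^n` times the `n`-th difference of `x ↦ (-x)^(n+1)` at `0`, which is `-D 0`.
Hence `2 D 0 = n (n+1)!`.
-/

open Finset Function

open scoped fwdDiff Nat

theorem neg_one_pow_add_mul_neg_one_pow {R : Type*} [Monoid R] [HasDistribNeg R] (k j : ℕ) :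
    (-1 : R) ^ (k + j) * (-1) ^ j = (-1) ^ k := by
  rw [pow_add, mul_assoc, ← pow_add, Even.neg_one_pow ⟨j, rfl⟩, mul_one]

theorem apply_add_nsmul_of_fwdDiff_eq_const {M G : Type*} [AddCommMonoid M] [AddCommGroup G]
    (h : M) {g : M → G} {c : G} (hg : Δ_[h] g = fun _ ↦ c) (y : M) (m : ℕ) :
    g (y + m • h) = g y + m • c := by
  induction m with
  | zero => simp
  | succ m ih =>
    have hstep : g (y + m • h + h) - g (y + m • h) = c := congrFun hg (y + m • h)
    rw [succ_nsmul, ← add_assoc, succ_nsmul, ← add_assoc, ← ih, ← hstep, add_sub_cancel]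

theorem fwdDiff_iter_neg_nsmul_sub {M G : Type*} [AddCommGroup M] [AddCommGroup G]
    (h : M) (f : M → G) (n : ℕ) (y : M) :
    Δ_[h] ^[n] f (-(n • h) - y) = (-1 : ℤ) ^ n • Δ_[h] ^[n] (fun x ↦ f (-x)) y := by
  rw [fwdDiff_iter_eq_sum_shift, fwdDiff_iter_eq_sum_shift, ← sum_range_reflect, smul_sum]
  refine sum_congr rfl fun k hk ↦ ?_
  obtain ⟨j, rfl⟩ := Nat.exists_eq_add_of_le (Nat.lt_succ_iff.mp (mem_range.mp hk))
  rw [show k + j + 1 - 1 - k = j by omega, smul_smul, Nat.add_sub_cancel,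
    Nat.add_sub_cancel_left, Nat.choose_symm_add]
  congr 1
  · rw [← mul_assoc, neg_one_pow_add_mul_neg_one_pow]
  · rw [add_nsmul]
    abel_nf

section CommRing

variable {R : Type*} [CommRing R]

theorem sum_choose_mul_neg_one_pow_mul_eq_fwdDiff_iter (f : R → R) (n : ℕ) :
    ∑ k ∈ range (n + 1), (n.choose k : R) * (-1) ^ k * f k = (-1) ^ n * Δ_[1] ^[n] f 0 := by
  rw [fwdDiff_iter_eq_sum_shift, mul_sum]
  refine sum_congr rfl fun k hk ↦ ?_
  obtain ⟨j, rfl⟩ := Nat.exists_eq_add_of_le (Nat.lt_succ_iff.mp (mem_range.mp hk))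
  rw [Nat.add_sub_cancel_left, zsmul_eq_mul, nsmul_one, zero_add]
  push_cast
  rw [← mul_assoc, ← mul_assoc, neg_one_pow_add_mul_neg_one_pow]
  ring

theorem two_mul_fwdDiff_iter_pow_succ_zero (n : ℕ) :
    2 * Δ_[1] ^[n] (fun r : R ↦ r ^ (n + 1)) 0 = n * (n + 1)! := by
  set D := Δ_[1] ^[n] (fun r : R ↦ r ^ (n + 1))
  have hslope : Δ_[1] D = fun _ ↦ ((n + 1)! : R) := by
    rw [← iterate_succ_apply' (f := fwdDiff 1), fwdDiff_iter_eq_factorial]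
    rfl
  have hshift := apply_add_nsmul_of_fwdDiff_eq_const 1 hslope (-(n • 1)) n
  have hneg : (fun r : R ↦ (-r) ^ (n + 1)) = (-1 : ℤ) ^ (n + 1) • fun r ↦ r ^ (n + 1) := by
    ext r
    simp [neg_pow r]
  have hreflect : D (-(n • 1)) = -D 0 := by
    have := fwdDiff_iter_neg_nsmul_sub (1 : R) (fun r ↦ r ^ (n + 1)) n 0
    rw [sub_zero] at this
    simp only [D]
    rw [this, hneg, fwdDiff_iter_const_smul, Pi.smul_apply, smul_smul, ← pow_add,
      Odd.neg_one_pow ⟨n, by ring⟩, neg_one_smul]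
  rw [neg_add_cancel, hreflect, nsmul_eq_mul] at hshift
  linear_combination hshift

theorem two_mul_sum_choose_mul_neg_one_pow_mul_pow_succ (n : ℕ) :
    2 * ∑ k ∈ range (n + 1), (n.choose k : R) * (-1) ^ k * (k : R) ^ (n + 1) =
      (-1) ^ n * n * (n + 1)! := by
  rw [sum_choose_mul_neg_one_pow_mul_eq_fwdDiff_iter (· ^ (n + 1)), mul_left_comm,
    two_mul_fwdDiff_iter_pow_succ_zero, mul_assoc]

end CommRing

/-- For every nonnegative integer `n`,
`∑ k in range (n+1), C(n,k) * (-1)^k * k^(n+1) = (-1)^n * (n/2) * (n+1)!`. -/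
theorem alternating_binomial_power_succ_sum (n : ℕ) :
    ∑ k ∈ range (n + 1), (n.choose k : ℂ) * (-1) ^ k * (k : ℂ) ^ (n + 1) =
      (-1) ^ n * ((n : ℂ) / 2) * ((n + 1).factorial : ℂ) := by
  linear_combination (1 / 2 : ℂ) * two_mul_sum_choose_mul_neg_one_pow_mul_pow_succ (R := ℂ) n
end

section
/- For every nonnegative integer m and every complex number x, the series Σ_{k=0}^{∞} k^m x^k / k! converges and equals e^x · Σ_{n=0}^{m} S(m,n) x^n. (Equivalently, applying the operator x·d/dx m times to e^x yields φ_m(x)·e^x, where φ_m(x) = Σ_{n=0}^{m} S(m,n) x^n is the m-th exponential polynomial.) -/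
/-!
Since `n! S(m,n)` is the `n`-th forward difference of `r ↦ r ^ m` at `0`, it vanishes for
`n > m`, and the Gregory–Newton formula expands `k ^ m` in falling factorials:
`k ^ m = ∑ₙ S(m,n) k(k-1)⋯(k-n+1)`. Multiplying by `x ^ k / k!` and summing over `k`, each
falling factorial contributes `∑ₖ k(k-1)⋯(k-n+1) x ^ k / k! = x ^ n e ^ x`.
-/

open Finset

open Nat fwdDiff

theorem factorial_mul_stirling2 (m n : ℕ) :
    (n ! : ℂ) * stirling2 m n = Δ_[1] ^[n] (fun r : ℂ ↦ r ^ m) 0 := by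
  rw [stirling2, mul_inv_cancel_left₀ (mod_cast n.factorial_ne_zero), fwdDiff_iter_eq_sum_shift]
  simp [zsmul_eq_mul]

theorem stirling2_eq_zero_of_lt {m n : ℕ} (h : m < n) : stirling2 m n = 0 := by
  have h_diff := factorial_mul_stirling2 m n
  rw [fwdDiff_iter_pow_eq_zero_of_lt h] at h_diff
  simpa [Nat.factorial_ne_zero] using h_diff

theorem natCast_pow_eq_sum_stirling2_mul_descFactorial (m k : ℕ) :
    (k : ℂ) ^ m = ∑ n ∈ range (m + 1), stirling2 m n * k.descFactorial n := by
  have newton := shift_eq_sum_fwdDiff_iter 1 (fun r : ℂ ↦ r ^ m) k 0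
  simp only [zero_add, nsmul_eq_mul, mul_one, ← factorial_mul_stirling2] at newton
  have truncate : ∀ N, min k m ≤ N → ∑ n ∈ range (N + 1), stirling2 m n * k.descFactorial n =
      ∑ n ∈ range (min k m + 1), stirling2 m n * k.descFactorial n := fun N hN ↦ by
    refine (sum_subset (range_subset_range.2 (by omega)) fun n hN hmin ↦ ?_).symm
    simp only [mem_range, not_lt] at hN hmin
    rcases le_or_gt n m with hnm | hmn
    · simp [descFactorial_eq_zero_iff_lt.2 (by omega : k < n)]
    · simp [stirling2_eq_zero_of_lt hmn]
  rw [truncate m (min_le_right _ _), ← truncate k (min_le_left _ _), newton]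
  refine sum_congr rfl fun n _ ↦ ?_
  rw [descFactorial_eq_factorial_mul_choose]
  push_cast
  ring

theorem hasSum_descFactorial_mul_pow_div_factorial (n : ℕ) (x : ℂ) :
    HasSum (fun k : ℕ ↦ k.descFactorial n * x ^ k / k !) (x ^ n * Complex.exp x) := by
  rw [← hasSum_nat_add_iff' n, sum_eq_zero fun k hk ↦ by
    simp [descFactorial_eq_zero_iff_lt.2 (mem_range.1 hk)], sub_zero]
  have hexp : HasSum (fun k : ℕ ↦ x ^ k / k !) (Complex.exp x) := by
    rw [Complex.exp_eq_exp_ℂ]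
    exact NormedSpace.expSeries_div_hasSum_exp x
  refine (hexp.mul_left (x ^ n)).congr_fun fun k ↦ ?_
  have hfact := factorial_mul_descFactorial (Nat.le_add_left n k)
  rw [Nat.add_sub_cancel] at hfact
  rw [← hfact]
  push_cast
  field_simp
  ring

/-- For every nonnegative integer `m` and complex `x`, the series
`∑ k, k^m x^k / k!` converges to `e^x * φ_m(x)`, where
`φ_m(x) = ∑ n in range (m+1), S(m,n) x^n` is the `m`-th exponential polynomial. -/
theorem hasSum_pow_mul_exp_eq_exponential_polynomial (m : ℕ) (x : ℂ) :
    HasSum (fun k : ℕ => (k : ℂ) ^ m * x ^ k / (k.factorial : ℂ))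
      (Complex.exp x * ∑ n ∈ range (m + 1), stirling2 m n * x ^ n) := by
  have expand (k : ℕ) : (k : ℂ) ^ m * x ^ k / k ! =
      ∑ n ∈ range (m + 1), stirling2 m n * (k.descFactorial n * x ^ k / k !) := by
    rw [natCast_pow_eq_sum_stirling2_mul_descFactorial m k, sum_mul, sum_div]
    exact sum_congr rfl fun n _ ↦ by ring
  rw [funext expand, mul_sum]
  refine hasSum_sum fun n _ ↦ ?_
  rw [mul_left_comm, mul_comm (Complex.exp x)]
  exact (hasSum_descFactorial_mul_pow_div_factorial n x).mul_left (stirling2 m n)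
end

section
/- For every nonnegative integer m and every complex number x with |x| < 1, the series Σ_{n=0}^{∞} n^m x^n converges and equals (1/(1−x)) · ω_m(x/(1−x)), where ω_m(z) = Σ_{n=0}^{m} S(m,n) · n! · z^n is the m-th geometric polynomial. -/
/-!
Newton's forward-difference formula writes `n ^ m = ∑ₖ C(n,k) Δᵏ[r ↦ r ^ m](0)`, a sum over
`k ≤ m` since `Δᵏ` kills polynomials of degree `< k`; and `Δᵏ[r ↦ r ^ m](0) = k! S(m,k)` is the
defining alternating sum of `S(m,k)`. Summing termwise against `xⁿ` with
`∑ₙ C(n,k) xⁿ = xᵏ / (1 - x) ^ (k + 1)` gives `(1 - x)⁻¹ ∑ₖ k! S(m,k) (x / (1 - x)) ^ k`.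
-/

open Finset

/-- The `m`-th geometric polynomial `ω_m(z) = ∑ n in range (m+1), S(m,n) n! z^n`. -/
noncomputable def geomPoly (m : ℕ) (z : ℂ) : ℂ :=
  ∑ n ∈ range (m + 1), stirling2 m n * (n.factorial : ℂ) * z ^ n

open fwdDiff

theorem hasSum_choose_mul_geometric {𝕜 : Type*} [NormedDivisionRing 𝕜]
    [HasSummableGeomSeries 𝕜] (k : ℕ) {x : 𝕜} (hx : ‖x‖ < 1) :
    HasSum (fun n : ℕ => (n.choose k : 𝕜) * x ^ n) (x ^ k / (1 - x) ^ (k + 1)) := by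
  have initial_terms : ∑ i ∈ range k, (i.choose k : 𝕜) * x ^ i = 0 :=
    sum_eq_zero fun i hi => by simp [Nat.choose_eq_zero_of_lt (mem_range.1 hi)]
  have shifted : (fun n => ((n + k).choose k : 𝕜) * x ^ (n + k)) =
      fun n => x ^ k * (((n + k).choose k : 𝕜) * x ^ n) := funext fun n => by
    rw [← mul_assoc, ← (Nat.cast_commute _ _).eq, mul_assoc, pow_add, pow_mul_comm]
  rw [← hasSum_nat_add_iff' k, initial_terms, sub_zero, shifted, div_eq_mul_one_div]
  exact (hasSum_choose_mul_geometric_of_norm_lt_one k hx).mul_left (x ^ k)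

theorem pow_eq_sum_choose_mul_fwdDiff_iter {R : Type*} [CommRing R] (m n : ℕ) :
    (n : R) ^ m = ∑ k ∈ range (m + 1), (n.choose k : R) * Δ_[1] ^[k] (fun r : R => r ^ m) 0 := by
  set g : ℕ → R := fun k => (n.choose k : R) * Δ_[1] ^[k] (fun r : R => r ^ m) 0
  calc (n : R) ^ m = ∑ k ∈ range (n + 1), g k := by
        simpa [g, nsmul_eq_mul] using shift_eq_sum_fwdDiff_iter (1 : R) (fun r => r ^ m) n 0
    _ = ∑ k ∈ range (n + m + 1), g k :=
        sum_subset (range_subset_range.2 (by omega)) fun k _ hk => by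
          simp [g, Nat.choose_eq_zero_of_lt (by simpa using hk : n < k)]
    _ = ∑ k ∈ range (m + 1), g k :=
        (sum_subset (range_subset_range.2 (by omega)) fun k _ hk => by
          simp [g, fwdDiff_iter_pow_eq_zero_of_lt (by simpa using hk : m < k)]).symm

theorem stirling2_mul_factorial (m k : ℕ) :
    stirling2 m k * k.factorial = Δ_[1] ^[k] (fun r : ℂ => r ^ m) 0 := by
  rw [stirling2, fwdDiff_iter_eq_sum_shift, mul_comm,
    mul_inv_cancel_left₀ (by simp [k.factorial_ne_zero])]
  simp

/-- For every nonnegative integer `m` and every complex `x` with `|x| < 1`,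
the series `∑ n, n^m x^n` converges and equals `(1/(1-x)) * ω_m(x/(1-x))`. -/
theorem hasSum_pow_mul_geom_eq_geometric_polynomial (m : ℕ) (x : ℂ) (hx : ‖x‖ < 1) :
    HasSum (fun n : ℕ => (n : ℂ) ^ m * x ^ n)
      ((1 - x)⁻¹ * geomPoly m (x / (1 - x))) := by
  have termwise := hasSum_sum fun k (_ : k ∈ range (m + 1)) =>
    (hasSum_choose_mul_geometric k hx).mul_left (stirling2 m k * k.factorial)
  have newton : (fun n : ℕ => (n : ℂ) ^ m * x ^ n) = fun n =>
      ∑ k ∈ range (m + 1), stirling2 m k * k.factorial * ((n.choose k : ℂ) * x ^ n) :=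
    funext fun n => by
      rw [pow_eq_sum_choose_mul_fwdDiff_iter m n, sum_mul]
      exact sum_congr rfl fun k _ => by rw [stirling2_mul_factorial]; ring
  have hx₁ : 1 - x ≠ 0 := fun h => by simp [← sub_eq_zero.1 h] at hx
  have value : (1 - x)⁻¹ * geomPoly m (x / (1 - x)) =
      ∑ k ∈ range (m + 1), stirling2 m k * k.factorial * (x ^ k / (1 - x) ^ (k + 1)) := by
    rw [geomPoly, mul_sum]
    exact sum_congr rfl fun k _ => by rw [div_pow, pow_succ]; field_simp
  rw [newton, value]
  exact termwise
end
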